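/- arXiv:0801.4220 — 2 statements merged into one kernel-verified Lean document; each statement's English description precedes it below -/
import Mathlib

section
/- For all real T > 0, c ≥ 0 with c < T, and all real ξ ≠ 0, the Fourier transform of the function x ↦ max(log(T/(|x|+c)), 0) satisfies ∫_{-∞}^{∞} e^{-2πiξx} · max(log(T/(|x|+c)),0) dx = (1/(π|ξ|)) ∫_0^{2π(T-c)|ξ|} sin(x)/(x + 2π|ξ|c) dx. -/
open MeasureTheory Real intervalIntegral Set Filter Topology

/-!
The kernel is even and vanishes for `|x| ≥ T - c`, so its Fourier transform is
`2 ∫₀^{T-c} cos(θx) (log T - log(x + c)) dx` with `θ = 2πξ`. Integrating by parts against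
`sin(θx)/θ` turns this into `2 ∫₀^{T-c} sin(θx) / (θ(x + c)) dx`: the boundary term vanishes at
`T - c` because the logarithm does, and at `0` because `x log(x + c) → 0`. The substitution
`u = |θ| x` then gives the stated integral.
-/

theorem intervalIntegral.integral_symm_eq_integral_add_comp_neg {E : Type*}
    [NormedAddCommGroup E] [NormedSpace ℝ E] {g : ℝ → E} {a : ℝ}
    (hneg : IntervalIntegrable g volume (-a) 0) (hpos : IntervalIntegrable g volume 0 a) :
    ∫ x in -a..a, g x = ∫ x in 0..a, (g x + g (-x)) := by
  have hrefl : IntervalIntegrable (fun x => g (-x)) volume 0 a := by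
    simpa using (IntervalIntegrable.iff_comp_neg (f := g)).mp hneg.symm
  rw [← integral_add_adjacent_intervals hneg hpos, integral_add hpos hrefl, add_comm,
    integral_comp_neg, neg_zero]

theorem integral_cexp_mul_of_even {f : ℝ → ℝ} {a : ℝ} (ξ : ℝ) (ha : 0 ≤ a)
    (heven : ∀ x, f (-x) = f x) (hsupp : ∀ x, a ≤ |x| → f x = 0)
    (hf : IntervalIntegrable f volume 0 a) :
    ∫ x : ℝ, Complex.exp (-2 * π * Complex.I * ξ * x) * (f x : ℂ) =
      ((∫ x in 0..a, 2 * cos (2 * π * ξ * x) * f x : ℝ) : ℂ) := by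
  set H : ℝ → ℂ := fun x => Complex.exp (-2 * π * Complex.I * ξ * x) * (f x : ℂ)
  have hfneg : IntervalIntegrable f volume (-a) 0 := by
    simpa [heven] using (IntervalIntegrable.iff_comp_neg (f := f)).mp hf.symm
  have hexp : Continuous fun x : ℝ => Complex.exp (-2 * π * Complex.I * ξ * x) := by fun_prop
  have hH : ∀ {b b'}, IntervalIntegrable f volume b b' → IntervalIntegrable H volume b b' :=
    fun hf => IntervalIntegrable.continuousOn_mul ⟨hf.1.ofReal, hf.2.ofReal⟩ hexp.continuousOn
  have hsuppH : ∀ x ∉ Ioc (-a) a, H x = 0 := by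
    intro x hx
    rw [mem_Ioc, not_and_or, not_lt, not_le] at hx
    have hxa : a ≤ |x| := le_abs.2 (hx.symm.imp le_of_lt fun h => by linarith)
    simp only [H, hsupp x hxa, Complex.ofReal_zero, mul_zero]
  have hpair : ∀ x, H x + H (-x) = ((2 * cos (2 * π * ξ * x) * f x : ℝ) : ℂ) := by
    intro x
    simp only [H, heven, Complex.ofReal_neg, ← add_mul]
    push_cast
    rw [Complex.two_cos]
    ring_nf
  calc ∫ x, H x = ∫ x in -a..a, H x := by
        rw [integral_of_le (by linarith), setIntegral_eq_integral_of_forall_compl_eq_zero hsuppH]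
    _ = ∫ x in 0..a, (H x + H (-x)) := integral_symm_eq_integral_add_comp_neg (hH hfneg) (hH hf)
    _ = _ := by simp only [hpair, intervalIntegral.integral_ofReal]

theorem abs_sin_mul_div_le (θ y : ℝ) : |sin (θ * y) / θ| ≤ |y| := by
  rcases eq_or_ne θ 0 with rfl | hθ
  · simp
  rw [abs_div, div_le_iff₀ (abs_pos.2 hθ), mul_comm, ← abs_mul]
  exact abs_sin_le_abs

theorem tendsto_mul_log_add_nhds_zero {c : ℝ} (hc : 0 ≤ c) :
    Tendsto (fun y => y * log (y + c)) (𝓝 0) (𝓝 0) := by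
  rcases hc.eq_or_lt with rfl | hc
  · simpa using continuous_mul_log.tendsto 0
  · have : ContinuousAt (fun y => y * log (y + c)) 0 := by
      fun_prop (disch := simp [hc.ne'])
    simpa using this.tendsto

theorem intervalIntegrable_sin_mul_div_mul_add (θ : ℝ) {a c : ℝ} (ha : 0 ≤ a) (hc : 0 ≤ c) :
    IntervalIntegrable (fun x => sin (θ * x) / (θ * (x + c))) volume 0 a := by
  refine (intervalIntegrable_const (c := (1 : ℝ))).mono_fun'
    (Measurable.aestronglyMeasurable (by fun_prop)) ?_
  rw [uIoc_of_le ha]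
  refine ae_restrict_of_forall_mem measurableSet_Ioc fun x hx => ?_
  have hxc : 0 < x + c := by linarith [hx.1]
  calc ‖sin (θ * x) / (θ * (x + c))‖ = |sin (θ * x) / θ| / (x + c) := by
        rw [Real.norm_eq_abs, mul_comm θ, ← div_div, abs_div, abs_of_pos hxc]
    _ ≤ |x| / (x + c) := div_le_div_of_nonneg_right (abs_sin_mul_div_le θ x) hxc.le
    _ ≤ 1 := by rw [abs_of_pos hx.1, div_le_one hxc]; linarith

theorem integral_sin_mul_div_mul_add {θ : ℝ} (hθ : θ ≠ 0) (a c : ℝ) :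
    ∫ x in 0..a, sin (θ * x) / (θ * (x + c)) =
      |θ|⁻¹ * ∫ u in 0..|θ| * a, sin u / (u + |θ| * c) := by
  have heven : ∀ x, sin (θ * x) / (θ * (x + c)) = sin (|θ| * x) / (|θ| * x + |θ| * c) := by
    intro x
    rcases abs_choice θ with h | h <;> rw [h]
    · ring_nf
    · rw [neg_mul, sin_neg, show -(θ * x) + -θ * c = -(θ * (x + c)) by ring, neg_div_neg_eq]
  simp only [heven]
  simpa using integral_comp_mul_left (a := 0) (b := a) (fun u => sin u / (u + |θ| * c))
    (abs_ne_zero.2 hθ)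

theorem intervalIntegrable_log_sub_log_add (T c a b : ℝ) :
    IntervalIntegrable (fun x => log T - log (x + c)) volume a b :=
  intervalIntegrable_const.sub
    (by simpa using (intervalIntegrable_log' (a := a + c) (b := b + c)).comp_add_right c)

theorem integral_cos_mul_log_sub_log_add {T c θ : ℝ} (hc : 0 ≤ c) (hcT : c < T)
    (hθ : θ ≠ 0) :
    ∫ x in 0..T - c, cos (θ * x) * (log T - log (x + c)) =
      ∫ x in 0..T - c, sin (θ * x) / (θ * (x + c)) := by
  set F : ℝ → ℝ := fun y => (log T - log (y + c)) * (sin (θ * y) / θ)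
  have hderiv : ∀ x ∈ Ioo 0 (T - c),
      HasDerivAt F (cos (θ * x) * (log T - log (x + c)) - sin (θ * x) / (θ * (x + c))) x := by
    intro x hx
    have hxc : x + c ≠ 0 := by linarith [hx.1]
    have hlog := ((hasDerivAt_id x).add_const c).log hxc
    have hsin := ((hasDerivAt_id x).const_mul θ).sin.div_const θ
    refine ((hlog.const_sub (log T)).mul hsin).congr_deriv ?_
    simp only [id]
    field_simp
    ring
  have hleft : Tendsto F (𝓝[>] 0) (𝓝 0) := by
    have hbound : Tendsto (fun y => y * log T - y * log (y + c)) (𝓝 0) (𝓝 0) := by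
      simpa using (tendsto_id.mul_const (log T)).sub (tendsto_mul_log_add_nhds_zero hc)
    refine squeeze_zero_norm (fun y => ?_) (by simpa using hbound.norm.mono_left nhdsWithin_le_nhds)
    calc ‖F y‖ = |log T - log (y + c)| * |sin (θ * y) / θ| := by
          rw [Real.norm_eq_abs, abs_mul]
      _ ≤ |log T - log (y + c)| * |y| :=
          mul_le_mul_of_nonneg_left (abs_sin_mul_div_le θ y) (abs_nonneg _)
      _ = ‖y * log T - y * log (y + c)‖ := by rw [Real.norm_eq_abs, ← abs_mul]; ring_nf
  have hright : Tendsto F (𝓝[<] (T - c)) (𝓝 0) := by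
    have hT : T - c + c ≠ 0 := by linarith
    have : ContinuousAt F (T - c) := by fun_prop (disch := exact hT)
    simpa [F] using this.tendsto.mono_left nhdsWithin_le_nhds
  have hcos : IntervalIntegrable (fun x => cos (θ * x) * (log T - log (x + c))) volume 0 (T - c) :=
    (intervalIntegrable_log_sub_log_add T c _ _).continuousOn_mul (by fun_prop)
  have hsin := intervalIntegrable_sin_mul_div_mul_add θ (sub_nonneg.2 hcT.le) hc
  have hFTC := integral_eq_sub_of_hasDerivAt_of_tendsto (by linarith) hderiv (hcos.sub hsin)
    hleft hright
  rwa [integral_sub hcos hsin, sub_self, sub_eq_zero] at hFTC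

noncomputable def logPlusKernel (T c x : ℝ) : ℝ := max (log (T / (|x| + c))) 0

theorem logPlusKernel_neg (T c x : ℝ) : logPlusKernel T c (-x) = logPlusKernel T c x := by
  simp [logPlusKernel]

theorem logPlusKernel_eq_zero {T c x : ℝ} (hT : 0 ≤ T) (hx : T ≤ |x| + c) :
    logPlusKernel T c x = 0 := by
  exact max_eq_right (log_nonpos (div_nonneg hT (by linarith)) (div_le_one_of_le₀ hx (by linarith)))

theorem logPlusKernel_of_pos_of_le {T c x : ℝ} (hc : 0 ≤ c) (hx : 0 < x) (hxT : x ≤ T - c) :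
    logPlusKernel T c x = log T - log (x + c) := by
  have hxc : 0 < x + c := by linarith
  rw [logPlusKernel, abs_of_pos hx, log_div (by linarith) hxc.ne']
  exact max_eq_left (sub_nonneg.2 (log_le_log hxc (by linarith)))

theorem intervalIntegrable_logPlusKernel {T c : ℝ} (hc : 0 ≤ c) (hcT : c ≤ T) :
    IntervalIntegrable (logPlusKernel T c) volume 0 (T - c) := by
  refine (intervalIntegrable_congr_uIoo fun x hx => ?_).mp
    (intervalIntegrable_log_sub_log_add T c _ _)
  rw [uIoo_of_le (sub_nonneg.2 hcT)] at hx
  exact (logPlusKernel_of_pos_of_le hc hx.1 hx.2.le).symm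

theorem fourier_transform_logplus_kernel
    (T c ξ : ℝ) (hT : 0 < T) (hc : 0 ≤ c) (hcT : c < T) (hξ : ξ ≠ 0) :
    ∫ x : ℝ, Complex.exp (-2 * Real.pi * Complex.I * ξ * x) *
        (max (Real.log (T / (|x| + c))) 0 : ℝ) =
      ((1 / (Real.pi * |ξ|)) *
        ∫ x in (0 : ℝ)..(2 * Real.pi * (T - c) * |ξ|),
          Real.sin x / (x + 2 * Real.pi * |ξ| * c) : ℝ) := by
  have hA : 0 ≤ T - c := sub_nonneg.2 hcT.le
  have hθ : 2 * π * ξ ≠ 0 := by positivity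
  have habs : |2 * π * ξ| = 2 * π * |ξ| := by rw [abs_mul, abs_of_pos (by positivity)]
  have hkernel : ∫ x in 0..T - c, 2 * cos (2 * π * ξ * x) * logPlusKernel T c x =
      2 * ∫ x in 0..T - c, cos (2 * π * ξ * x) * (log T - log (x + c)) := by
    rw [← intervalIntegral.integral_const_mul]
    refine integral_congr_uIoo fun x hx => ?_
    rw [uIoo_of_le hA] at hx
    rw [logPlusKernel_of_pos_of_le hc hx.1 hx.2.le, mul_assoc]
  refine (integral_cexp_mul_of_even ξ hA (logPlusKernel_neg T c)
    (fun x hx => logPlusKernel_eq_zero hT.le (by linarith))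
    (intervalIntegrable_logPlusKernel hc hcT.le)).trans ?_
  rw [hkernel, integral_cos_mul_log_sub_log_add hc hcT hθ, integral_sin_mul_div_mul_add hθ, habs]
  congr 1
  rw [show 2 * π * |ξ| * (T - c) = 2 * π * (T - c) * |ξ| by ring]
  field_simp
end

section
/- Fix L > 0 and let the kernel K_L(t,s) = (1/(πL)) · (1 − g_L(t)²) / ((1 − g_L(t))² − 2 g_L(t) s/L) · 1/√(1 − (1 + s/L)²) for t > 0 and s ∈ (−2L, 0), where g_L(t) = t/L + 1 − √((t/L+1)²−1). Then as L → ∞ with t > 0 and s < 0 fixed, K_L(t,s) → (1/π) √t/((t−s)√(−s)). -/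
open Real Filter

/-- The boundary conformal factor `g_L(t) = t/L + 1 - √((t/L+1)² - 1)`. -/
noncomputable def gL (L t : ℝ) : ℝ := t / L + 1 - Real.sqrt ((t / L + 1) ^ 2 - 1)

/-- The finite-window prediction kernel `K_L(t,s)`. -/
noncomputable def KL (L t s : ℝ) : ℝ :=
  (1 / (Real.pi * L)) * ((1 - gL L t ^ 2) / ((1 - gL L t) ^ 2 - 2 * gL L t * s / L)) *
    (1 / Real.sqrt (1 - (1 + s / L) ^ 2))

/-!
With `u = t/L`, `g = g_L(t)` is the smaller root of `g² - 2(1+u)g + 1 = 0`, so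
`(1 - g)² = 2ug` and `1 - g = √u (√(u+2) - √u)`. The first identity turns the denominator
`(1 - g)² - 2gs/L` into `2g(t - s)/L`, cancelling the prefactor `1/L`; the second, together with
`1 - (1 + s/L)² = (-s/L)(2 + s/L)`, leaves `K_L(t,s)` as `√t / (π (t - s) √(-s))` times a factor
built from `√(u+2) - √u`, `g` and `√(2 + s/L)`, which tends to `√2 · 2 / (2 √2) = 1`.
-/

section

variable {L t s : ℝ}

lemma gL_eq (ht : 0 ≤ t / L) : gL L t = t / L + 1 - √(t / L) * √(t / L + 2) := by
  rw [gL, show (t / L + 1) ^ 2 - 1 = t / L * (t / L + 2) by ring, Real.sqrt_mul ht]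

lemma one_sub_gL (ht : 0 ≤ t / L) : 1 - gL L t = √(t / L) * (√(t / L + 2) - √(t / L)) := by
  rw [gL_eq ht]
  linear_combination Real.sq_sqrt ht

lemma one_sub_gL_sq (ht : 0 ≤ t / L) : (1 - gL L t) ^ 2 = 2 * (t / L) * gL L t := by
  have hu2 : √(t / L + 2) ^ 2 = t / L + 2 := Real.sq_sqrt (by linarith)
  rw [gL_eq ht]
  linear_combination √(t / L + 2) ^ 2 * Real.sq_sqrt ht + t / L * hu2

lemma gL_pos (ht : 0 ≤ t / L) : 0 < gL L t := by
  have hroot := one_sub_gL_sq ht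
  by_contra! hg
  nlinarith [sq_nonneg (1 - gL L t)]

lemma tendsto_gL_atTop (t : ℝ) : Tendsto (fun L ↦ gL L t) atTop (nhds 1) := by
  have hu : Tendsto (fun L : ℝ ↦ t / L + 1) atTop (nhds (0 + 1)) :=
    (tendsto_const_nhds.div_atTop tendsto_id).add_const 1
  simpa [gL] using hu.sub ((hu.pow 2).sub_const 1).sqrt

lemma sqrt_one_sub_one_add_div_sq (hs : s ≤ 0) (hL : 0 < L) :
    √(1 - (1 + s / L) ^ 2) = √(-s) * √(2 + s / L) / √L := by
  rw [show 1 - (1 + s / L) ^ 2 = -s / L * (2 + s / L) by ring,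
    Real.sqrt_mul (div_nonneg (by linarith) hL.le), Real.sqrt_div (by linarith)]
  ring

lemma KL_eq (ht : 0 ≤ t) (hs : s < 0) (hsL : -s < 2 * L) :
    KL L t s = 1 / π * √t / ((t - s) * √(-s)) *
      ((√(t / L + 2) - √(t / L)) * (1 + gL L t) / (2 * gL L t * √(2 + s / L))) := by
  have hL : 0 < L := by linarith
  have hu : 0 ≤ t / L := div_nonneg ht hL.le
  have hg := gL_pos hu
  have hden : (1 - gL L t) ^ 2 - 2 * gL L t * s / L = 2 * gL L t * (t - s) / L := by
    rw [one_sub_gL_sq hu]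
    field_simp
  have hsqrt_t : √t = √(t / L) * √L := by
    rw [← Real.sqrt_mul hu, div_mul_cancel₀ _ hL.ne']
  have hsqrt_L : √L ^ 2 = L := Real.sq_sqrt hL.le
  have hts : 0 < t - s := by linarith
  have hsqrt_s : 0 < √(-s) := Real.sqrt_pos.mpr (by linarith)
  have hsqrt_2s : 0 < √(2 + s / L) := by
    have : -2 < s / L := by rw [lt_div_iff₀ hL]; linarith
    exact Real.sqrt_pos.mpr (by linarith)
  have hsqrt_L0 : 0 < √L := Real.sqrt_pos.mpr hL
  rw [KL, hden, sqrt_one_sub_one_add_div_sq hs.le hL,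
    show 1 - gL L t ^ 2 = (1 - gL L t) * (1 + gL L t) by ring, one_sub_gL hu, hsqrt_t,
    ← hsqrt_L]
  field_simp

end

lemma tendsto_KL_correction_atTop (t s : ℝ) :
    Tendsto (fun L ↦ (√(t / L + 2) - √(t / L)) * (1 + gL L t) / (2 * gL L t * √(2 + s / L)))
      atTop (nhds 1) := by
  have hu : Tendsto (fun L : ℝ ↦ t / L) atTop (nhds 0) := tendsto_const_nhds.div_atTop tendsto_id
  have hv : Tendsto (fun L : ℝ ↦ s / L) atTop (nhds 0) := tendsto_const_nhds.div_atTop tendsto_id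
  have hg := tendsto_gL_atTop t
  have hlim := (((hu.add_const 2).sqrt.sub hu.sqrt).mul (hg.const_add 1)).div
    ((hg.const_mul 2).mul (hv.const_add 2).sqrt) (by positivity)
  have hval : (√(0 + 2) - √0) * (1 + 1) / (2 * 1 * √(2 + 0)) = (1 : ℝ) := by
    simp only [zero_add, add_zero, Real.sqrt_zero, sub_zero, mul_one]
    field_simp
    norm_num
  rwa [hval] at hlim

theorem KL_tendsto_infinite_window_kernel (t s : ℝ) (ht : 0 < t) (hs : s < 0) :
    Tendsto (fun L : ℝ => KL L t s) atTop
      (nhds ((1 / Real.pi) * Real.sqrt t / ((t - s) * Real.sqrt (-s)))) := by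
  have hlim := (tendsto_const_nhds (x := 1 / π * √t / ((t - s) * √(-s)))).mul
    (tendsto_KL_correction_atTop t s)
  rw [mul_one] at hlim
  refine hlim.congr' ?_
  filter_upwards [eventually_gt_atTop (-s)] with L hL
  exact (KL_eq ht.le hs (by linarith)).symm
end
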